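/- For every threshold τ > 0, the generalized linear-core surrogate Φ̄_τ is convex on ℝ and continuously differentiable on ℝ (of class C¹), with Φ̄_τ'(u) = −1 for every u ∈ [−τ, τ]. -/

import Mathlib

/-!
On `[-τ, τ]` the surrogate is affine with slope `-1`, and outside it is a translate of `Φ / Φ'(0)`
reflected so that its slope at `±τ` is `-Φ'(0) / Φ'(0) = -1`. Hence the three pieces glue to a
differentiable function with derivative `u ↦ -Φ'(c u - u) / Φ'(0)`, where `c u` is the projection
of `u` onto `[-τ, τ]`. Since `u ↦ c u - u` is antitone and `Φ'` is monotone (convexity), this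
derivative is monotone, so the surrogate is convex. It is continuous because `Φ'` is: a monotone
function with the intermediate value property (Darboux) has no jumps.
-/

/-- The generalized linear-core surrogate `Φ̄_τ` with threshold `τ > 0`:
`Φ̄_τ(u) = -u + τ + Φ(0)/Φ'(0)` for `-τ ≤ u ≤ τ`, `Φ̄_τ(u) = Φ(τ-u)/Φ'(0)` for `u > τ`,
and `Φ̄_τ(u) = Φ(-τ-u)/Φ'(0) + 2τ` for `u < -τ`. -/
noncomputable def barPhiTau (Φ : ℝ → ℝ) (τ : ℝ) (u : ℝ) : ℝ :=
  if τ < u then Φ (τ - u) / deriv Φ 0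
  else if u < -τ then Φ (-τ - u) / deriv Φ 0 + 2 * τ
  else -u + τ + Φ 0 / deriv Φ 0

open Set Filter

section MonotoneContinuity

variable {α β : Type*} [LinearOrder α] [TopologicalSpace α] [OrderTopology α]
  [LinearOrder β] [TopologicalSpace β] [OrderTopology β] [DenselyOrdered β] {f : α → β}

theorem Monotone.continuousWithinAt_Ici_of_ordConnected_range (hf : Monotone f)
    (hr : (range f).OrdConnected) (a : α) : ContinuousWithinAt f (Ici a) a := by
  by_cases habove : ∃ c, f a < f c
  · obtain ⟨c, hc⟩ := habove
    refine continuousWithinAt_right_of_monotoneOn_of_exists_between (hf.monotoneOn _) univ_mem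
      fun b hb => ?_
    obtain ⟨y, hay, hyb⟩ := exists_between (lt_min hb hc)
    obtain ⟨x, rfl⟩ := hr.out (mem_range_self a) (mem_range_self c)
      ⟨hay.le, hyb.le.trans (min_le_right _ _)⟩
    exact ⟨x, trivial, hay, hyb.trans_le (min_le_left _ _)⟩
  · simp only [not_exists, not_lt] at habove
    exact continuousWithinAt_const.congr (fun x hx => le_antisymm (habove x) (hf hx)) rfl

theorem Monotone.continuous_of_ordConnected_range (hf : Monotone f)
    (hr : (range f).OrdConnected) : Continuous f := by
  refine continuous_iff_continuousAt.2 fun a => continuousAt_iff_continuous_left_right.2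
    ⟨?_, hf.continuousWithinAt_Ici_of_ordConnected_range hr a⟩
  exact hf.dual.continuousWithinAt_Ici_of_ordConnected_range (α := αᵒᵈ) (β := βᵒᵈ) hr.dual a

end MonotoneContinuity

theorem ConvexOn.monotone_deriv {f : ℝ → ℝ} (hconv : ConvexOn ℝ univ f)
    (hf : Differentiable ℝ f) : Monotone (deriv f) :=
  monotoneOn_univ.1 (hconv.monotoneOn_deriv fun x _ => hf x)

theorem ConvexOn.continuous_deriv {f : ℝ → ℝ} (hconv : ConvexOn ℝ univ f)
    (hf : Differentiable ℝ f) : Continuous (deriv f) := by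
  have hdarboux := ordConnected_univ.image_deriv fun x _ => hf x
  rw [image_univ] at hdarboux
  exact (hconv.monotone_deriv hf).continuous_of_ordConnected_range hdarboux

section Gluing

variable {𝕜 F : Type*} [NontriviallyNormedField 𝕜] [NormedAddCommGroup F] [NormedSpace 𝕜 F]
  {f : 𝕜 → F} {f' : F} {s t : Set 𝕜} {x : 𝕜}

theorem HasDerivWithinAt.of_isClosed (hs : IsClosed s) (h : x ∈ s → HasDerivWithinAt f f' s x) :
    HasDerivWithinAt f f' s x := by
  by_cases hx : x ∈ s
  · exact h hx
  · exact HasFDerivWithinAt.of_notMem_closure (by rwa [hs.closure_eq])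

theorem HasDerivWithinAt.union_of_isClosed (hs : IsClosed s) (ht : IsClosed t)
    (hfs : x ∈ s → HasDerivWithinAt f f' s x) (hft : x ∈ t → HasDerivWithinAt f f' t x) :
    HasDerivWithinAt f f' (s ∪ t) x :=
  (HasDerivWithinAt.of_isClosed hs hfs).union (HasDerivWithinAt.of_isClosed ht hft)

end Gluing

theorem antitone_max_min_sub (a b : ℝ) : Antitone fun u => max a (min u b) - u := by
  intro u v huv
  dsimp only
  rw [← max_sub_sub_right, ← min_sub_sub_right, ← max_sub_sub_right, ← min_sub_sub_right,
    sub_self, sub_self]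
  gcongr

noncomputable def barPhiTauDeriv (Φ : ℝ → ℝ) (τ u : ℝ) : ℝ :=
  -deriv Φ (max (-τ) (min u τ) - u) / deriv Φ 0

section BarPhiTau

variable {Φ : ℝ → ℝ} {τ : ℝ}

theorem barPhiTau_eqOn_Iic (hτ : 0 ≤ τ) :
    EqOn (barPhiTau Φ τ) (fun u => Φ (-τ - u) / deriv Φ 0 + 2 * τ) (Iic (-τ)) := by
  intro u (hu : u ≤ -τ)
  have hu' : ¬ τ < u := by linarith
  rcases hu.lt_or_eq with hu | rfl
  · simp [barPhiTau, hu', hu]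
  · simp [barPhiTau, hu']
    ring

theorem barPhiTau_eqOn_Icc :
    EqOn (barPhiTau Φ τ) (fun u => -u + τ + Φ 0 / deriv Φ 0) (Icc (-τ) τ) := by
  intro u ⟨hu₁, hu₂⟩
  simp [barPhiTau, hu₁.not_gt, hu₂.not_gt]

theorem barPhiTau_eqOn_Ici (hτ : 0 ≤ τ) :
    EqOn (barPhiTau Φ τ) (fun u => Φ (τ - u) / deriv Φ 0) (Ici τ) := by
  intro u (hu : τ ≤ u)
  have hu' : ¬ u < -τ := by linarith
  rcases hu.lt_or_eq with hu | rfl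
  · simp [barPhiTau, hu]
  · simp [barPhiTau, hu']

theorem barPhiTauDeriv_of_mem_Icc (hd0 : deriv Φ 0 ≠ 0) {u : ℝ} (hu : u ∈ Icc (-τ) τ) :
    barPhiTauDeriv Φ τ u = -1 := by
  rw [barPhiTauDeriv, min_eq_left hu.2, max_eq_right hu.1, sub_self, neg_div, div_self hd0]

theorem hasDerivAt_barPhiTau (hΦ : Differentiable ℝ Φ) (hd0 : deriv Φ 0 ≠ 0) (hτ : 0 ≤ τ)
    (u : ℝ) : HasDerivAt (barPhiTau Φ τ) (barPhiTauDeriv Φ τ u) u := by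
  have hL : u ∈ Iic (-τ) →
      HasDerivWithinAt (barPhiTau Φ τ) (barPhiTauDeriv Φ τ u) (Iic (-τ)) u := by
    intro (hu : u ≤ -τ)
    rw [barPhiTauDeriv, min_eq_left (by linarith), max_eq_left hu]
    refine HasDerivAt.hasDerivWithinAt ?_ |>.congr (barPhiTau_eqOn_Iic hτ)
      (barPhiTau_eqOn_Iic hτ hu)
    exact (((hΦ _).hasDerivAt.comp_const_sub _ _).div_const _).add_const _
  have hM : u ∈ Icc (-τ) τ →
      HasDerivWithinAt (barPhiTau Φ τ) (barPhiTauDeriv Φ τ u) (Icc (-τ) τ) u := by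
    intro hu
    rw [barPhiTauDeriv_of_mem_Icc hd0 hu]
    refine HasDerivAt.hasDerivWithinAt ?_ |>.congr barPhiTau_eqOn_Icc (barPhiTau_eqOn_Icc hu)
    exact ((hasDerivAt_id u).neg.add_const τ).add_const _
  have hR : u ∈ Ici τ → HasDerivWithinAt (barPhiTau Φ τ) (barPhiTauDeriv Φ τ u) (Ici τ) u := by
    intro (hu : τ ≤ u)
    rw [barPhiTauDeriv, min_eq_right hu, max_eq_right (by linarith)]
    refine HasDerivAt.hasDerivWithinAt ?_ |>.congr (barPhiTau_eqOn_Ici hτ)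
      (barPhiTau_eqOn_Ici hτ hu)
    exact ((hΦ _).hasDerivAt.comp_const_sub _ _).div_const _
  have h := HasDerivWithinAt.union_of_isClosed isClosed_Iic (isClosed_Icc.union isClosed_Ici) hL
    fun _ => HasDerivWithinAt.union_of_isClosed isClosed_Icc isClosed_Ici hM hR
  rwa [Icc_union_Ici_eq_Ici (by linarith), Iic_union_Ici, hasDerivWithinAt_univ] at h

theorem monotone_barPhiTauDeriv (hΦ : Monotone (deriv Φ)) (hd0 : 0 < deriv Φ 0) :
    Monotone (barPhiTauDeriv Φ τ) := fun _ _ huv =>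
  div_le_div_of_nonneg_right (neg_le_neg (hΦ (antitone_max_min_sub _ _ huv))) hd0.le

theorem continuous_barPhiTauDeriv (hΦ : Continuous (deriv Φ)) :
    Continuous (barPhiTauDeriv Φ τ) := by
  unfold barPhiTauDeriv
  fun_prop

end BarPhiTau

theorem barPhiTau_convex_contDiff_general (Φ : ℝ → ℝ)
    (hconv : ConvexOn ℝ Set.univ Φ) (hdiff : Differentiable ℝ Φ)
    (hd0 : 0 < deriv Φ 0)
    (τ : ℝ) (hτ : 0 < τ) :
    ConvexOn ℝ Set.univ (barPhiTau Φ τ) ∧ ContDiff ℝ 1 (barPhiTau Φ τ) ∧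
      ∀ u ∈ Set.Icc (-τ) τ, deriv (barPhiTau Φ τ) u = -1 := by
  have hderiv := hasDerivAt_barPhiTau hdiff hd0.ne' hτ.le
  have hdiff_bar : Differentiable ℝ (barPhiTau Φ τ) := fun u => (hderiv u).differentiableAt
  have hderiv_eq : deriv (barPhiTau Φ τ) = barPhiTauDeriv Φ τ := funext fun u => (hderiv u).deriv
  refine ⟨?_, ?_, fun u hu => hderiv_eq ▸ barPhiTauDeriv_of_mem_Icc hd0.ne' hu⟩
  · exact Monotone.convexOn_univ_of_deriv hdiff_bar
      (hderiv_eq ▸ monotone_barPhiTauDeriv (hconv.monotone_deriv hdiff) hd0)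
  · exact contDiff_one_iff_deriv.2
      ⟨hdiff_bar, hderiv_eq ▸ continuous_barPhiTauDeriv (hconv.continuous_deriv hdiff)⟩

/-- for every `τ > 0`, the generalized linear-core surrogate `Φ̄_τ` is
convex on `ℝ` and continuously differentiable (class `C¹`), with derivative `-1` on
`[-τ, τ]`. -/
theorem barPhiTau_convex_contDiff (Φ : ℝ → ℝ)
    (hconv : ConvexOn ℝ Set.univ Φ) (hdiff : Differentiable ℝ Φ)
    (hnn : ∀ u, 0 ≤ Φ u) (hd0 : 0 < deriv Φ 0)
    (τ : ℝ) (hτ : 0 < τ) :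
    ConvexOn ℝ Set.univ (barPhiTau Φ τ) ∧ ContDiff ℝ 1 (barPhiTau Φ τ) ∧
      ∀ u ∈ Set.Icc (-τ) τ, deriv (barPhiTau Φ τ) u = -1 :=
  barPhiTau_convex_contDiff_general Φ hconv hdiff hd0 τ hτ
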